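/- (Quasi-differenced long autocovariance with an ARMA(1,q) non-skill component.) In the ARMA setting with k ≥ q, for all integers t, t' with t' ≥ t + k + 1, cov(w_t, w_{t'}) − ρ_{t'} · cov(w_t, w_{t'−1}) = μ_t · (μ_{t'} − ρ_{t'} · μ_{t'−1}) · Var(θ_t). -/

import Mathlib

/-!
Expanding `w`, all cross-covariances between skill, the autoregressive component and the
transitory shock vanish, so `cov (w t) (w s)` splits into the three own covariances. For
`s ≥ t + k` the transitory term vanishes; since skill increments are uncorrelated with the past,
`cov (θ t) (θ s) = Var (θ t)` for `s ≥ t`; and for `s > t + q` all innovations entering `φ s`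
postdate `φ t`, so `cov (φ t) (φ s) = ρ s * cov (φ t) (φ (s - 1))`, which the quasi-difference
cancels.
-/

open MeasureTheory ProbabilityTheory

/-- Covariance of two real-valued random variables under measure `P`. -/
noncomputable def cov {Ω : Type*} [MeasurableSpace Ω] (P : Measure Ω) (X Y : Ω → ℝ) : ℝ :=
  ∫ ω, (X ω - ∫ a, X a ∂P) * (Y ω - ∫ a, Y a ∂P) ∂P

/-- Variance of a real-valued random variable under measure `P`. -/
noncomputable def Var {Ω : Type*} [MeasurableSpace Ω] (P : Measure Ω) (X : Ω → ℝ) : ℝ :=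
  cov P X X

section

variable {Ω : Type*} [MeasurableSpace Ω] {P : Measure Ω}

theorem cov_eq_covariance (X Y : Ω → ℝ) : cov P X Y = covariance X Y P := rfl

variable [IsFiniteMeasure P]

theorem covariance_eq_of_uncorrelated_increments {θ : ℤ → Ω → ℝ}
    (hθ : ∀ t, MemLp (θ t) 2 P)
    {t : ℤ} (hΔ : ∀ s, t < s → covariance (θ s - θ (s - 1)) (θ t) P = 0) :
    ∀ s, t ≤ s → covariance (θ t) (θ s) P = covariance (θ t) (θ t) P := by
  intro s hs
  induction s, hs using Int.leInduction with
  | base => rfl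
  | succ s hts ih =>
    have hinc := hΔ (s + 1) (by omega)
    rw [add_sub_cancel_right, covariance_sub_left (hθ _) (hθ _) (hθ _), sub_eq_zero] at hinc
    rw [covariance_comm, hinc, covariance_comm, ih]

theorem covariance_ARMA_eq_mul_covariance_sub_one {q : ℕ} {β : ℕ → ℝ} {ρ : ℤ → ℝ}
    {φ ν : ℤ → Ω → ℝ} (hφ : ∀ t, MemLp (φ t) 2 P) (hν : ∀ t, MemLp (ν t) 2 P)
    (hrec : ∀ t ω, φ t ω = ρ t * φ (t - 1) ω +
      ∑ j ∈ Finset.range (q + 1), β j * ν (t - (j : ℤ)) ω)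
    {t s : ℤ} (hν_future : ∀ u, t < u → covariance (φ t) (ν u) P = 0) (hts : t + q < s) :
    covariance (φ t) (φ s) P = ρ s * covariance (φ t) (φ (s - 1)) P := by
  have hφs : φ s = ρ s • φ (s - 1) + ∑ j ∈ Finset.range (q + 1), β j • ν (s - j) := by
    ext ω; simp [hrec s ω]
  have hMA : ∑ j ∈ Finset.range (q + 1), β j * covariance (φ t) (ν (s - j)) P = 0 :=
    Finset.sum_eq_zero fun j hj => by
      rw [hν_future _ (by have := Finset.mem_range.mp hj; omega), mul_zero]
  rw [hφs, covariance_add_right (hφ _) ((hφ _).const_smul _)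
      (memLp_finsetSum' _ fun j _ => (hν _).const_smul _),
    covariance_sum_right' (fun j _ => (hν _).const_smul _) (hφ _)]
  simp only [covariance_smul_right, hMA, add_zero]

theorem covariance_add_add_of_uncorrelated {θ φ ε : ℤ → Ω → ℝ} {μ : ℤ → ℝ}
    (hθ : ∀ t, MemLp (θ t) 2 P) (hφ : ∀ t, MemLp (φ t) 2 P) (hε : ∀ t, MemLp (ε t) 2 P)
    (hθφ : ∀ t t', covariance (θ t) (φ t') P = 0)
    (hθε : ∀ t t', covariance (θ t) (ε t') P = 0)
    (hφε : ∀ t t', covariance (φ t) (ε t') P = 0) (t s : ℤ) :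
    covariance (μ t • θ t + φ t + ε t) (μ s • θ s + φ s + ε s) P =
      μ t * μ s * covariance (θ t) (θ s) P + covariance (φ t) (φ s) P
        + covariance (ε t) (ε s) P := by
  have expand : ∀ X, MemLp X 2 P → covariance X (μ s • θ s + φ s + ε s) P =
      μ s * covariance X (θ s) P + covariance X (φ s) P + covariance X (ε s) P := fun X hX => by
    rw [covariance_add_right hX (((hθ s).const_smul _).add (hφ s)) (hε s),
      covariance_add_right hX ((hθ s).const_smul _) (hφ s), covariance_smul_right]
  rw [covariance_add_left (((hθ t).const_smul _).add (hφ t)) (hε t)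
      ((((hθ s).const_smul _).add (hφ s)).add (hε s)),
    covariance_add_left ((hθ t).const_smul _) (hφ t)
      ((((hθ s).const_smul _).add (hφ s)).add (hε s)),
    covariance_smul_left, expand _ (hθ t), expand _ (hφ t), expand _ (hε t),
    covariance_comm (φ t) (θ s), covariance_comm (ε t) (θ s), covariance_comm (ε t) (φ s)]
  simp only [hθφ, hθε, hφε]
  ring

end

theorem ARMA_quasi_differenced_autocov_general
    {Ω : Type*} [MeasurableSpace Ω] (P : Measure Ω) [IsProbabilityMeasure P]
    (k q : ℕ) (hqk : q ≤ k) (β : ℕ → ℝ)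
    (μ ρ : ℤ → ℝ) (θ φ ν ε : ℤ → Ω → ℝ) (w : ℤ → Ω → ℝ)
    (hθ : ∀ t, MemLp (θ t) 2 P) (hφ : ∀ t, MemLp (φ t) 2 P)
    (hν : ∀ t, MemLp (ν t) 2 P) (hε : ∀ t, MemLp (ε t) 2 P)
    (hw : ∀ t ω, w t ω = μ t * θ t ω + φ t ω + ε t ω)
    (hrec : ∀ t ω, φ t ω = ρ t * φ (t - 1) ω +
      ∑ j ∈ Finset.range (q + 1), β j * ν (t - (j : ℤ)) ω)
    (hΔθθ : ∀ t t' : ℤ, t' < t →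
      cov P (fun ω => θ t ω - θ (t - 1) ω) (θ t') = 0)
    (hθφ : ∀ t t' : ℤ, cov P (θ t) (φ t') = 0)
    (hθε : ∀ t t' : ℤ, cov P (θ t) (ε t') = 0)
    (hφν : ∀ t t' : ℤ, t' < t → cov P (φ t') (ν t) = 0)
    (hφε : ∀ t t' : ℤ, cov P (φ t) (ε t') = 0)
    (hεε : ∀ t t' : ℤ, (k : ℤ) ≤ |t - t'| → cov P (ε t) (ε t') = 0) :
    ∀ t t' : ℤ, t + k + 1 ≤ t' →
      cov P (w t) (w t') - ρ t' * cov P (w t) (w (t' - 1)) =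
        μ t * (μ t' - ρ t' * μ (t' - 1)) * Var P (θ t) := by
  intro t t' ht
  obtain rfl : w = fun s => μ s • θ s + φ s + ε s :=
    funext fun s => funext fun ω => by simp [hw]
  have hθθ := covariance_eq_of_uncorrelated_increments hθ (t := t) fun s hs => hΔθθ s t hs
  have hεε_far : ∀ s, t + k ≤ s → covariance (ε t) (ε s) P = 0 := fun s hs =>
    hεε t s (by rw [abs_sub_comm, abs_of_nonneg (by omega)]; omega)
  simp only [cov_eq_covariance, Var, covariance_add_add_of_uncorrelated hθ hφ hε hθφ hθε hφε,
    hθθ t' (by omega), hθθ (t' - 1) (by omega), hεε_far t' (by omega),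
    hεε_far (t' - 1) (by omega),
    covariance_ARMA_eq_mul_covariance_sub_one hφ hν hrec (fun u hu => hφν u t hu)
      (by omega : t + q < t')]
  ring

/-- Quasi-differenced long autocovariance with an ARMA(1,q) non-skill component:
for `t' ≥ t + k + 1`,
`cov (w t) (w t') − ρ t' * cov (w t) (w (t'−1)) = μ t * (μ t' − ρ t' * μ (t'−1)) * Var (θ t)`. -/
theorem ARMA_quasi_differenced_autocov
    {Ω : Type*} [MeasurableSpace Ω] (P : Measure Ω) [IsProbabilityMeasure P]
    (k q : ℕ) (hk : 1 ≤ k) (hqk : q ≤ k) (β : ℕ → ℝ)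
    (μ ρ : ℤ → ℝ) (θ φ ν ε : ℤ → Ω → ℝ) (w : ℤ → Ω → ℝ)
    (hθ : ∀ t, MemLp (θ t) 2 P) (hφ : ∀ t, MemLp (φ t) 2 P)
    (hν : ∀ t, MemLp (ν t) 2 P) (hε : ∀ t, MemLp (ε t) 2 P)
    (hw : ∀ t ω, w t ω = μ t * θ t ω + φ t ω + ε t ω)
    (hrec : ∀ t ω, φ t ω = ρ t * φ (t - 1) ω +
      ∑ j ∈ Finset.range (q + 1), β j * ν (t - (j : ℤ)) ω)
    (hΔθθ : ∀ t t' : ℤ, t' < t →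
      cov P (fun ω => θ t ω - θ (t - 1) ω) (θ t') = 0)
    (hθφ : ∀ t t' : ℤ, cov P (θ t) (φ t') = 0)
    (hθν : ∀ t t' : ℤ, cov P (θ t) (ν t') = 0)
    (hθε : ∀ t t' : ℤ, cov P (θ t) (ε t') = 0)
    (hφν : ∀ t t' : ℤ, t' < t → cov P (φ t') (ν t) = 0)
    (hνν : ∀ t t' : ℤ, t' < t → cov P (ν t') (ν t) = 0)
    (hφε : ∀ t t' : ℤ, cov P (φ t) (ε t') = 0)
    (hνε : ∀ t t' : ℤ, cov P (ν t) (ε t') = 0)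
    (hεε : ∀ t t' : ℤ, (k : ℤ) ≤ |t - t'| → cov P (ε t) (ε t') = 0) :
    ∀ t t' : ℤ, t + k + 1 ≤ t' →
      cov P (w t) (w t') - ρ t' * cov P (w t) (w (t' - 1)) =
        μ t * (μ t' - ρ t' * μ (t' - 1)) * Var P (θ t) :=
  ARMA_quasi_differenced_autocov_general P k q hqk β μ ρ θ φ ν ε w hθ hφ hν hε hw hrec hΔθθ hθφ hθε
    hφν hφε hεε
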